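/- For every nonempty set E of positive integers there exists a sequence (A_i)_{i≥1} of nonempty finite subsets of ℕ satisfying 2·(max A_i) < min A_{i+1} for all i ≥ 1, with the following property. Let 𝒮 denote the collection of all subsets of ℤ that are unions of finitely many of the sets A_i. Then: (a) for every nonempty C ∈ 𝒮 the set { k ∈ ℤ : C + k ∈ 𝒮 } is finite and its cardinality belongs to E; and (b) for every n ∈ E there exists a nonempty C ∈ 𝒮 such that the set { k ∈ ℤ : C + k ∈ 𝒮 } has exactly n elements. (Here C + k := { c + k : c ∈ C }.) -/

import Mathlib

set_option maxHeartbeats 1000000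

namespace S2
abbrev Task := Sum ℕ (Finset ℕ × ℕ)

noncomputable def cde : Task ≃ ℕ := by
  have : Denumerable Task := inferInstance
  exact Denumerable.eqv Task

variable (e : ℕ → ℕ) (m : ℕ)

def tgt (g : ℕ) : ℕ := max 1 (e g)

def validT : Task → Prop
  | .inl p => p.unpair.2 < tgt e p.unpair.1
  | .inr (I, j) => 2 ≤ I.card ∧ j < m - 1

def readyT : Task → ℕ → Prop
  | .inl _, _ => True
  | .inr (I, _), t => ∀ i ∈ I, i < t

/-- predicate for the code chosen at step `t`, given list `L` of used codes -/
def Pc (t : ℕ) (L : List ℕ) (c : ℕ) : Prop :=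
  validT e m (cde.symm c) ∧ readyT (cde.symm c) t ∧ c ∉ L

lemma Pc_ex (t : ℕ) (L : List ℕ) : ∃ c, Pc e m t L c := by
  have hinj : Function.Injective (fun g : ℕ => cde ((Sum.inl (Nat.pair g 0)) : Task)) := by
    intro a b h
    have h2 := cde.injective h
    have h3 := Sum.inl.inj h2
    have h4 : (Nat.pair a 0).unpair = (Nat.pair b 0).unpair := by rw [h3]
    simpa [Nat.unpair_pair] using congrArg Prod.fst h4
  obtain ⟨g, hg, hgl⟩ : ∃ g, g ∈ Finset.range (L.length + 1) ∧
      cde ((Sum.inl (Nat.pair g 0)) : Task) ∉ L := by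
    by_contra h
    push_neg at h
    have hmaps : ∀ g ∈ Finset.range (L.length + 1),
        cde ((Sum.inl (Nat.pair g 0)) : Task) ∈ L.toFinset := by
      intro g hg; simpa using h g hg
    have := Finset.card_le_card_of_injOn _ hmaps (hinj.injOn)
    simp at this
    have h2 := List.toFinset_card_le L
    omega
  refine ⟨_, ?_, ?_, hgl⟩ <;> rw [Equiv.symm_apply_apply]
  · simp [validT, Nat.unpair_pair, tgt]
  · trivial

noncomputable instance : DecidablePred (Pc e m t L) := fun _ => Classical.dec _

/-- list of codes scheduled before step t -/
noncomputable def SL : ℕ → List ℕ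
  | 0 => []
  | t + 1 => SL t ++ [Nat.find (Pc_ex e m t (SL t))]

noncomputable def sched (t : ℕ) : ℕ := Nat.find (Pc_ex e m t (SL e m t))

lemma SL_eq (t : ℕ) : SL e m (t + 1) = SL e m t ++ [sched e m t] := rfl

lemma SL_map (t : ℕ) : SL e m t = (List.range t).map (sched e m) := by
  induction t with
  | zero => rfl
  | succ t ih => rw [SL_eq, ih, List.range_succ, List.map_append]; rfl

lemma sched_spec (t : ℕ) : Pc e m t (SL e m t) (sched e m t) := Nat.find_spec (Pc_ex e m t (SL e m t))

lemma sched_min (t : ℕ) {c : ℕ} (h : Pc e m t (SL e m t) c) : sched e m t ≤ c :=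
  Nat.find_le h

lemma sched_ne_of_lt {s t : ℕ} (hst : s < t) : sched e m s ≠ sched e m t := by
  intro h
  have h2 := (sched_spec e m t).2.2
  rw [SL_map] at h2
  exact h2 (by rw [← h]; exact List.mem_map_of_mem (List.mem_range.2 hst))

lemma sched_inj : Function.Injective (sched e m) := by
  intro a b h
  rcases lt_trichotomy a b with h'|h'|h'
  · exact absurd h (sched_ne_of_lt e m h')
  · exact h'
  · exact absurd h.symm (sched_ne_of_lt e m h')

noncomputable def src (t : ℕ) : Task := cde.symm (sched e m t)

lemma src_valid (t : ℕ) : validT e m (src e m t) := (sched_spec e m t).1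
lemma src_ready (t : ℕ) : readyT (src e m t) t := (sched_spec e m t).2.1

lemma sched_eq_encode (t : ℕ) : sched e m t = cde (src e m t) := by
  simp [src]

lemma src_inj {s t : ℕ} (h : src e m s = src e m t) : s = t := by
  apply sched_inj e m
  rw [sched_eq_encode, sched_eq_encode, h]

/-- surjectivity: every valid task is eventually scheduled -/
lemma sched_surj (τ : Task) (hv : validT e m τ) : ∃ t, src e m t = τ := by
  by_contra hno
  push_neg at hno
  set c := cde τ with hc
  obtain ⟨T0, hready⟩ : ∃ T0 : ℕ, ∀ t, T0 ≤ t → readyT τ t := by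
    match τ with
    | .inl _ => exact ⟨0, fun _ _ => trivial⟩
    | .inr (I, j) =>
      refine ⟨(I.sup id) + 1, fun t ht i hi => ?_⟩
      have : i ≤ I.sup id := Finset.le_sup (f := id) hi
      omega
  have hle : ∀ t, T0 ≤ t → sched e m t ≤ c := by
    intro t ht
    apply sched_min
    refine ⟨?_, ?_, ?_⟩
    · rw [hc, Equiv.symm_apply_apply]; exact hv
    · rw [hc, Equiv.symm_apply_apply]; exact hready t ht
    · rw [SL_map]
      intro hmem
      obtain ⟨s, -, hs⟩ := List.mem_map.mp hmem
      exact hno s (by rw [src, hs, hc, Equiv.symm_apply_apply])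
  -- pigeonhole
  have hinj : Set.InjOn (sched e m) ↑(Finset.Icc T0 (T0 + c + 1)) := fun a _ b _ h => sched_inj e m h
  have hmaps : ∀ t ∈ Finset.Icc T0 (T0 + c + 1), sched e m t ∈ Finset.range (c + 1) := by
    intro t ht
    simp only [Finset.mem_Icc] at ht
    exact Finset.mem_range.2 (Nat.lt_succ_of_le (hle t ht.1))
  have := Finset.card_le_card_of_injOn _ hmaps hinj
  simp [Nat.add_sub_cancel] at this
  omega

open Classical in
noncomputable def stepOf (τ : Task) : ℕ :=
  if h : validT e m τ then Classical.choose (sched_surj e m τ h) else 0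

lemma src_stepOf {τ : Task} (h : validT e m τ) : src e m (stepOf e m τ) = τ := by
  rw [stepOf, dif_pos h]; exact Classical.choose_spec (sched_surj e m τ h)

lemma stepOf_src (t : ℕ) : stepOf e m (src e m t) = t :=
  src_inj e m (src_stepOf e m (src_valid e m t))

-- min/max helpers
noncomputable def mn (X : Finset ℕ) : ℕ := WithTop.untopD 0 X.min
noncomputable def mx (X : Finset ℕ) : ℕ := WithBot.unbotD 0 X.max

lemma mn_eq {X : Finset ℕ} (h : X.Nonempty) : mn X = X.min' h := by
  rw [mn, ← Finset.coe_min' h]; rfl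

lemma mx_eq {X : Finset ℕ} (h : X.Nonempty) : mx X = X.max' h := by
  rw [mx, ← Finset.coe_max' h]; rfl

lemma mn_mem {X : Finset ℕ} (h : X.Nonempty) : mn X ∈ X := by
  rw [mn_eq h]; exact X.min'_mem h

lemma mn_le {X : Finset ℕ} {x : ℕ} (hx : x ∈ X) : mn X ≤ x := by
  rw [mn_eq ⟨x, hx⟩]; exact X.min'_le x hx

lemma mx_mem {X : Finset ℕ} (h : X.Nonempty) : mx X ∈ X := by
  rw [mx_eq h]; exact X.max'_mem h

lemma le_mx {X : Finset ℕ} {x : ℕ} (hx : x ∈ X) : x ≤ mx X := by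
  rw [mx_eq ⟨x, hx⟩]; exact X.le_max' x hx

lemma mn_image_add {X : Finset ℕ} (h : X.Nonempty) (u : ℕ) :
    mn (X.image (· + u)) = mn X + u := by
  have h2 : (X.image (· + u)).Nonempty := h.image _
  apply le_antisymm
  · exact mn_le (Finset.mem_image_of_mem _ (mn_mem h))
  · obtain ⟨x, hx, hx2⟩ := Finset.mem_image.mp (mn_mem h2)
    have := mn_le hx
    omega

lemma mx_image_add {X : Finset ℕ} (h : X.Nonempty) (u : ℕ) :
    mx (X.image (· + u)) = mx X + u := by
  have h2 : (X.image (· + u)).Nonempty := h.image _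
  apply le_antisymm
  · obtain ⟨x, hx, hx2⟩ := Finset.mem_image.mp (mx_mem h2)
    have := le_mx hx
    omega
  · exact le_mx (Finset.mem_image_of_mem _ (mx_mem h))

lemma mn_eq_zero {X : Finset ℕ} (h : (0:ℕ) ∈ X) : mn X = 0 :=
  Nat.le_zero.mp (mn_le h)

-- ### construction layer

noncomputable def maxL (l : List (Finset ℕ)) : ℕ := l.foldr (fun b n => max (mx b) n) 0

lemma mx_le_maxL {l : List (Finset ℕ)} {b : Finset ℕ} (h : b ∈ l) : mx b ≤ maxL l := by
  induction l with
  | nil => simp at h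
  | cons a l ih =>
    rcases List.mem_cons.mp h with h | h
    · subst h; simp [maxL]
    · have := ih h
      simp only [maxL, List.foldr] at *
      omega

noncomputable def UL (l : List (Finset ℕ)) (I : Finset ℕ) : Finset ℕ :=
  I.biUnion (fun i => l.getD i ∅)

noncomputable def norm (X : Finset ℕ) : Finset ℕ := X.image (fun x => x - mn X)

def seedAt (g t : ℕ) : Prop := ∃ j, src e m t = Sum.inl (Nat.pair g j)

noncomputable instance : DecidablePred (seedAt e m g) := fun _ => Classical.dec _

lemma seedAt_ex (g : ℕ) : ∃ t, seedAt e m g t :=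
  ⟨stepOf e m (Sum.inl (Nat.pair g 0)), 0, by
    apply src_stepOf
    simp [validT, Nat.unpair_pair, tgt]⟩

noncomputable def sfirst (g : ℕ) : ℕ := Nat.find (seedAt_ex e m g)

noncomputable def patL (l : List (Finset ℕ)) (t : ℕ) : Finset ℕ :=
  match src e m t with
  | .inl p => {0, maxL (l.take (sfirst e m p.unpair.1)) + 1}
  | .inr (I, _) => norm (UL l I)

noncomputable def badL (l : List (Finset ℕ)) (t : ℕ) : Finset ℕ :=
  ((Finset.range t).powerset ×ˢ (Finset.range t).powerset).image
    (fun IJ => mx (UL l IJ.2) + mn (UL l IJ.1) - (mn (UL l IJ.2) + mx (patL e m l t)))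

noncomputable def offL (l : List (Finset ℕ)) (t : ℕ) : ℕ :=
  2 * maxL l + (badL e m l t).sup id + 1

noncomputable def nb (l : List (Finset ℕ)) (t : ℕ) : Finset ℕ :=
  (patL e m l t).image (· + offL e m l t)

noncomputable def hist : ℕ → List (Finset ℕ)
  | 0 => []
  | t + 1 => hist t ++ [nb e m (hist t) t]

noncomputable def A (t : ℕ) : Finset ℕ := nb e m (hist e m t) t

noncomputable def pat (t : ℕ) : Finset ℕ := patL e m (hist e m t) t

noncomputable def off (t : ℕ) : ℕ := offL e m (hist e m t) t

noncomputable def U (I : Finset ℕ) : Finset ℕ := I.biUnion (A e m)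

lemma A_eq (t : ℕ) : A e m t = (pat e m t).image (· + off e m t) := rfl

lemma hist_length (t : ℕ) : (hist e m t).length = t := by
  induction t with
  | zero => rfl
  | succ t ih => simp [hist, ih]

lemma hist_getD {i t : ℕ} (h : i < t) : (hist e m t).getD i ∅ = A e m i := by
  induction t with
  | zero => omega
  | succ t ih =>
    rcases Nat.lt_or_ge i t with h' | h'
    · rw [hist, List.getD_append _ _ _ _ (by rw [hist_length]; exact h')]
      exact ih h'
    · have : i = t := by omega
      subst this
      rw [hist, List.getD_eq_getElem?_getD, List.getElem?_append_right (by rw [hist_length])]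
      simp [hist_length]
      rfl

lemma hist_take {s t : ℕ} (h : s ≤ t) : (hist e m t).take s = hist e m s := by
  induction t with
  | zero => have : s = 0 := by omega
            subst this; rfl
  | succ t ih =>
    rcases Nat.lt_or_ge t s with h' | h'
    · have : s = t + 1 := by omega
      subst this
      exact List.take_of_length_le (by rw [hist_length])
    · rw [hist, List.take_append_of_le_length (by rw [hist_length]; exact h')]
      exact ih h'

lemma UL_hist {I : Finset ℕ} {t : ℕ} (h : ∀ i ∈ I, i < t) :
    UL (hist e m t) I = U e m I := by
  apply Finset.biUnion_congr rfl
  intro i hi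
  exact hist_getD e m (h i hi)

-- ### basic block facts

lemma A_basic : ∀ t, (A e m t).Nonempty ∧ 2 ≤ (A e m t).card := by
  intro t
  induction t using Nat.strong_induction_on with
  | _ t ih =>
    have hpat : 2 ≤ (pat e m t).card := by
      rw [pat, patL]
      rcases hsrc : src e m t with p | ⟨I, j⟩
      · rw [Finset.card_insert_of_notMem (by simp), Finset.card_singleton]
      · have hv := src_valid e m t
        have hr := src_ready e m t
        rw [hsrc] at hv hr
        obtain ⟨hI2, -⟩ := hv
        obtain ⟨i, hi⟩ := Finset.card_pos.mp (by omega : 0 < I.card)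
        dsimp only
        rw [UL_hist e m hr]
        have hAi : A e m i ⊆ U e m I := Finset.subset_biUnion_of_mem _ hi
        have h1 : 2 ≤ (U e m I).card :=
          le_trans (ih i (hr i hi)).2 (Finset.card_le_card hAi)
        have hUne : (U e m I).Nonempty := Finset.card_pos.mp (by omega)
        rw [norm, Finset.card_image_of_injOn]
        · exact h1
        · intro x hx y hy hxy
          have := mn_le hx
          have := mn_le hy
          simp only at hxy
          omega
    constructor
    · apply Finset.card_pos.mp
      rw [A_eq, Finset.card_image_of_injective _ (add_left_injective _)]
      omega
    · rw [A_eq, Finset.card_image_of_injective _ (add_left_injective _)]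
      exact hpat

lemma A_ne (t : ℕ) : (A e m t).Nonempty := (A_basic e m t).1
lemma A_card (t : ℕ) : 2 ≤ (A e m t).card := (A_basic e m t).2

lemma pat_ne (t : ℕ) : (pat e m t).Nonempty := by
  have := A_ne e m t
  rw [A_eq] at this
  exact Finset.Nonempty.of_image this

lemma U_ne {I : Finset ℕ} (h : I.Nonempty) : (U e m I).Nonempty := by
  obtain ⟨i, hi⟩ := h
  obtain ⟨x, hx⟩ := A_ne e m i
  exact ⟨x, Finset.mem_biUnion.mpr ⟨i, hi, hx⟩⟩

lemma mn_pat (t : ℕ) : mn (pat e m t) = 0 := by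
  apply mn_eq_zero
  rw [pat, patL]
  rcases hsrc : src e m t with p | ⟨I, j⟩
  · simp
  · have hr := src_ready e m t
    rw [hsrc] at hr
    dsimp only
    rw [UL_hist e m hr, norm]
    have hv := src_valid e m t
    rw [hsrc] at hv
    obtain ⟨hI2, -⟩ : 2 ≤ I.card ∧ j < m - 1 := hv
    have hUne : (U e m I).Nonempty := U_ne e m (Finset.card_pos.mp (by omega))
    refine Finset.mem_image.mpr ⟨mn (U e m I), mn_mem hUne, by simp⟩

lemma mn_A (t : ℕ) : mn (A e m t) = off e m t := by
  rw [A_eq, mn_image_add (pat_ne e m t), mn_pat, Nat.zero_add]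

lemma mx_A (t : ℕ) : mx (A e m t) = mx (pat e m t) + off e m t := by
  rw [A_eq, mx_image_add (pat_ne e m t)]

lemma mx_le_maxL_hist {i t : ℕ} (h : i < t) : mx (A e m i) ≤ maxL (hist e m t) := by
  apply mx_le_maxL
  rw [← hist_getD e m h]
  rw [List.getD_eq_getElem _ _ (by rw [hist_length]; exact h)]
  exact List.getElem_mem _

lemma off_gt (t : ℕ) : 2 * maxL (hist e m t) < off e m t := by
  rw [off, offL]; omega

lemma sep {i t : ℕ} (h : i < t) : 2 * mx (A e m i) < mn (A e m t) := by
  have h1 := mx_le_maxL_hist e m h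
  have h2 := off_gt e m t
  rw [mn_A]
  omega

lemma elem_lt {i j x y : ℕ} (h : i < j) (hx : x ∈ A e m i) (hy : y ∈ A e m j) : x < y := by
  have h1 := le_mx hx
  have h2 := mn_le hy
  have := sep e m h
  omega

lemma mx_U {I : Finset ℕ} (h : I.Nonempty) : mx (U e m I) = mx (A e m (I.max' h)) := by
  apply le_antisymm
  · have hm := mx_mem (U_ne e m h)
    obtain ⟨i, hi, hx⟩ := Finset.mem_biUnion.mp hm
    rcases Nat.lt_or_ge i (I.max' h) with h' | h'
    · have h1 : mx (U e m I) < mn (A e m (I.max' h)) := elem_lt e m h' hx (mn_mem (A_ne e m _))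
      have h2 : mn (A e m (I.max' h)) ≤ mx (A e m (I.max' h)) := mn_le (mx_mem (A_ne e m _))
      omega
    · have : i = I.max' h := le_antisymm (I.le_max' i hi) h'
      subst this
      exact le_mx hx
  · exact le_mx (Finset.mem_biUnion.mpr ⟨_, I.max'_mem h, mx_mem (A_ne e m _)⟩)

lemma mn_U {I : Finset ℕ} (h : I.Nonempty) : mn (U e m I) = mn (A e m (I.min' h)) := by
  apply le_antisymm
  · exact mn_le (Finset.mem_biUnion.mpr ⟨_, I.min'_mem h, mn_mem (A_ne e m _)⟩)
  · have hm := mn_mem (U_ne e m h)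
    obtain ⟨i, hi, hx⟩ := Finset.mem_biUnion.mp hm
    rcases Nat.lt_or_ge (I.min' h) i with h' | h'
    · have h1 : mn (A e m (I.min' h)) ≤ mx (A e m (I.min' h)) := mn_le (mx_mem (A_ne e m _))
      have h2 : mx (A e m (I.min' h)) < mn (U e m I) := elem_lt e m h' (mx_mem (A_ne e m _)) hx
      omega
    · have : i = I.min' h := le_antisymm h' (I.min'_le i hi)
      subst this
      exact mn_le hx

lemma mem_U_iff {I : Finset ℕ} {i : ℕ} : i ∈ I ↔ mx (A e m i) ∈ U e m I := by
  constructor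
  · intro hi
    exact Finset.mem_biUnion.mpr ⟨i, hi, mx_mem (A_ne e m i)⟩
  · intro hm
    obtain ⟨j, hj, hx⟩ := Finset.mem_biUnion.mp hm
    rcases lt_trichotomy i j with h | h | h
    · exact absurd (elem_lt e m h (mx_mem (A_ne e m i)) hx) (by omega)
    · subst h; exact hj
    · have h1 := elem_lt e m h hx (mx_mem (A_ne e m i))
      omega

lemma U_inj {I J : Finset ℕ} (h : U e m I = U e m J) : I = J := by
  ext i
  constructor
  · intro hi
    have h1 := (mem_U_iff e m).mp hi
    rw [h] at h1
    exact (mem_U_iff e m).mpr h1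
  · intro hi
    have h1 := (mem_U_iff e m).mp hi
    rw [← h] at h1
    exact (mem_U_iff e m).mpr h1

lemma A_disj {i j : ℕ} (h : i ≠ j) : Disjoint (A e m i) (A e m j) := by
  rw [Finset.disjoint_left]
  intro x hx hx'
  rcases lt_or_gt_of_ne h with h' | h'
  · exact absurd (elem_lt e m h' hx hx') (by omega)
  · exact absurd (elem_lt e m h' hx' hx) (by omega)

lemma card_U {I : Finset ℕ} : 2 * I.card ≤ (U e m I).card := by
  rw [U, Finset.card_biUnion (fun i _ j _ hij => A_disj e m hij)]
  calc 2 * I.card = ∑ _i ∈ I, 2 := by simp [mul_comm]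
  _ ≤ _ := Finset.sum_le_sum (fun i _ => A_card e m i)

-- ### integer translation layer

noncomputable def Z (X : Finset ℕ) : Finset ℤ := X.image ((↑) : ℕ → ℤ)

noncomputable def sh (F : Finset ℤ) (k : ℤ) : Finset ℤ := F.image (· + k)

lemma Z_def (X : Finset ℕ) : Z X = X.image ((↑) : ℕ → ℤ) := rfl
lemma sh_def (F : Finset ℤ) (k : ℤ) : sh F k = F.image (· + k) := rfl

def TI (I : Finset ℕ) (k : ℤ) (J : Finset ℕ) : Prop := sh (Z (U e m I)) k = Z (U e m J)

lemma Z_inj {X Y : Finset ℕ} (h : Z X = Z Y) : X = Y :=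
  Finset.image_injective Nat.cast_injective h

lemma Z_ne {X : Finset ℕ} (h : X.Nonempty) : (Z X).Nonempty := h.image _

lemma sh_sh (F : Finset ℤ) (k k' : ℤ) : sh (sh F k) k' = sh F (k + k') := by
  rw [sh, sh, sh, Finset.image_image]
  apply Finset.image_congr
  intro x _
  simp [add_assoc]

lemma sh_zero (F : Finset ℤ) : sh F 0 = F := by
  rw [sh]
  simp

lemma sh_card (F : Finset ℤ) (k : ℤ) : (sh F k).card = F.card :=
  Finset.card_image_of_injective _ (add_left_injective _)

noncomputable def mnz (F : Finset ℤ) : ℤ := WithTop.untopD 0 F.min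
noncomputable def mxz (F : Finset ℤ) : ℤ := WithBot.unbotD 0 F.max

lemma mnz_eq {F : Finset ℤ} (h : F.Nonempty) : mnz F = F.min' h := by
  rw [mnz, ← Finset.coe_min' h]; rfl

lemma mxz_eq {F : Finset ℤ} (h : F.Nonempty) : mxz F = F.max' h := by
  rw [mxz, ← Finset.coe_max' h]; rfl

lemma mnz_mem {F : Finset ℤ} (h : F.Nonempty) : mnz F ∈ F := by
  rw [mnz_eq h]; exact F.min'_mem h

lemma mnz_le {F : Finset ℤ} {x : ℤ} (hx : x ∈ F) : mnz F ≤ x := by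
  rw [mnz_eq ⟨x, hx⟩]; exact F.min'_le x hx

lemma mxz_mem {F : Finset ℤ} (h : F.Nonempty) : mxz F ∈ F := by
  rw [mxz_eq h]; exact F.max'_mem h

lemma le_mxz {F : Finset ℤ} {x : ℤ} (hx : x ∈ F) : x ≤ mxz F := by
  rw [mxz_eq ⟨x, hx⟩]; exact F.le_max' x hx

lemma mnz_Z {X : Finset ℕ} (h : X.Nonempty) : mnz (Z X) = (mn X : ℤ) := by
  have hz : (Z X).Nonempty := Z_ne h
  apply le_antisymm
  · exact mnz_le (Finset.mem_image_of_mem _ (mn_mem h))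
  · obtain ⟨x, hx, hx2⟩ := Finset.mem_image.mp (mnz_mem hz)
    have hc : (mn X : ℤ) ≤ (x : ℤ) := by exact_mod_cast mn_le hx
    simp only [Z_def] at *
    omega

lemma mxz_Z {X : Finset ℕ} (h : X.Nonempty) : mxz (Z X) = (mx X : ℤ) := by
  have hz : (Z X).Nonempty := Z_ne h
  apply le_antisymm
  · obtain ⟨x, hx, hx2⟩ := Finset.mem_image.mp (mxz_mem hz)
    have hc : (x : ℤ) ≤ (mx X : ℤ) := by exact_mod_cast le_mx hx
    simp only [Z_def] at *
    omega
  · exact le_mxz (Finset.mem_image_of_mem _ (mx_mem h))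

lemma mnz_sh {F : Finset ℤ} (h : F.Nonempty) (k : ℤ) : mnz (sh F k) = mnz F + k := by
  have hsh : (sh F k).Nonempty := h.image _
  apply le_antisymm
  · exact mnz_le (Finset.mem_image_of_mem _ (mnz_mem h))
  · obtain ⟨x, hx, hx2⟩ := Finset.mem_image.mp (mnz_mem hsh)
    have := mnz_le hx
    simp only [sh_def] at *
    omega

lemma mxz_sh {F : Finset ℤ} (h : F.Nonempty) (k : ℤ) : mxz (sh F k) = mxz F + k := by
  have hsh : (sh F k).Nonempty := h.image _
  apply le_antisymm
  · obtain ⟨x, hx, hx2⟩ := Finset.mem_image.mp (mxz_mem hsh)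
    have := le_mxz hx
    simp only [sh_def] at *
    omega
  · exact le_mxz (Finset.mem_image_of_mem _ (mxz_mem h))

lemma TI_k {I J : Finset ℕ} {k : ℤ} (hI : I.Nonempty) (h : TI e m I k J) :
    k = (mn (U e m J) : ℤ) - (mn (U e m I) : ℤ) := by
  have h1 := congrArg mnz h
  rw [mnz_sh (Z_ne (U_ne e m hI)), mnz_Z (U_ne e m hI)] at h1
  have hJ : J.Nonempty := by
    by_contra hJ
    rw [Finset.not_nonempty_iff_eq_empty] at hJ
    subst hJ
    have : (sh (Z (U e m I)) k).Nonempty := (Z_ne (U_ne e m hI)).image _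
    rw [TI] at h
    rw [h] at this
    simp [Z, U] at this
  rw [mnz_Z (U_ne e m hJ)] at h1
  omega

lemma TI_mx {I J : Finset ℕ} {k : ℤ} (hI : I.Nonempty) (h : TI e m I k J) :
    (mx (U e m I) : ℤ) + k = (mx (U e m J) : ℤ) := by
  have hJ : J.Nonempty := by
    by_contra hJ
    rw [Finset.not_nonempty_iff_eq_empty] at hJ
    subst hJ
    have : (sh (Z (U e m I)) k).Nonempty := (Z_ne (U_ne e m hI)).image _
    rw [TI] at h
    rw [h] at this
    simp [Z, U] at this
  have h1 := congrArg mxz h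
  rw [mxz_sh (Z_ne (U_ne e m hI)), mxz_Z (U_ne e m hI), mxz_Z (U_ne e m hJ)] at h1
  omega

lemma TI_nonempty {I J : Finset ℕ} {k : ℤ} (hI : I.Nonempty) (h : TI e m I k J) :
    J.Nonempty := by
  by_contra hJ
  rw [Finset.not_nonempty_iff_eq_empty] at hJ
  subst hJ
  have : (sh (Z (U e m I)) k).Nonempty := (Z_ne (U_ne e m hI)).image _
  rw [TI] at h
  rw [h] at this
  simp [Z, U] at this

lemma TI_symm {I J : Finset ℕ} {k : ℤ} (h : TI e m I k J) : TI e m J (-k) I := by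
  rw [TI, ← h, sh_sh]
  simp [sh_zero]

lemma TI_trans {I J K : Finset ℕ} {k k' : ℤ} (h : TI e m I k J) (h' : TI e m J k' K) :
    TI e m I (k + k') K := by
  rw [TI, ← sh_sh, h]
  exact h'

lemma TI_zero {I J : Finset ℕ} (h : TI e m I 0 J) : I = J := by
  rw [TI, sh_zero] at h
  exact U_inj e m (Z_inj h)

lemma TI_card {I J : Finset ℕ} {k : ℤ} (h : TI e m I k J) :
    (U e m I).card = (U e m J).card := by
  have h1 := congrArg Finset.card h
  rw [sh_card] at h1
  rw [Z, Z, Finset.card_image_of_injective _ Nat.cast_injective,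
    Finset.card_image_of_injective _ Nat.cast_injective] at h1
  exact h1

lemma U_singleton (t : ℕ) : U e m {t} = A e m t := Finset.singleton_biUnion

-- designed shifts
lemma copy_shift {t : ℕ} {I₀ : Finset ℕ} {j : ℕ} (h : src e m t = Sum.inr (I₀, j)) :
    TI e m I₀ ((off e m t : ℤ) - (mn (U e m I₀) : ℤ)) {t} := by
  have hr := src_ready e m t
  rw [h] at hr
  rw [TI, U_singleton, A_eq, pat, patL, h]
  dsimp only
  rw [UL_hist e m hr]
  rw [norm, Finset.image_image, Z, Z, Finset.image_image, sh, Finset.image_image]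
  apply Finset.image_congr
  intro x hx
  have h1 := mn_le hx
  simp only [Function.comp_apply]
  push_cast [h1]
  ring

-- ### seed patterns

lemma sfirst_spec (g : ℕ) : ∃ j, src e m (sfirst e m g) = Sum.inl (Nat.pair g j) :=
  Nat.find_spec (seedAt_ex e m g)

lemma sfirst_le {t : ℕ} {p : ℕ} (h : src e m t = Sum.inl p) :
    sfirst e m p.unpair.1 ≤ t := by
  apply Nat.find_min'
  exact ⟨p.unpair.2, by rw [Nat.pair_unpair]; exact h⟩

noncomputable def Dg (g : ℕ) : ℕ := maxL (hist e m (sfirst e m g)) + 1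

lemma pat_seed {t : ℕ} {p : ℕ} (h : src e m t = Sum.inl p) :
    pat e m t = {0, Dg e m p.unpair.1} := by
  rw [pat, patL, h]
  dsimp only
  rw [hist_take e m (sfirst_le e m h)]
  rfl

lemma card_A_eq_card_pat (t : ℕ) : (A e m t).card = (pat e m t).card := by
  rw [A_eq, Finset.card_image_of_injective _ (add_left_injective _)]

lemma card_A_seed {t : ℕ} {p : ℕ} (h : src e m t = Sum.inl p) : (A e m t).card = 2 := by
  rw [card_A_eq_card_pat, pat_seed e m h]
  rw [Finset.card_insert_of_notMem (by simp [Dg]), Finset.card_singleton]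

lemma card_A_copy {t : ℕ} {I₀ : Finset ℕ} {j : ℕ} (h : src e m t = Sum.inr (I₀, j)) :
    4 ≤ (A e m t).card := by
  have hr := src_ready e m t
  have hv := src_valid e m t
  rw [h] at hr hv
  obtain ⟨hI2, -⟩ : 2 ≤ I₀.card ∧ j < m - 1 := hv
  rw [card_A_eq_card_pat, pat, patL, h]
  dsimp only
  rw [UL_hist e m hr, norm, Finset.card_image_of_injOn]
  · have := card_U (e := e) (m := m) (I := I₀)
    omega
  · intro x hx y hy hxy
    have := mn_le hx
    have := mn_le hy
    simp only at hxy
    omega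

lemma maxL_append (l : List (Finset ℕ)) (b : Finset ℕ) :
    maxL (l ++ [b]) = max (maxL l) (mx b) := by
  induction l with
  | nil =>
    show max (mx b) 0 = max 0 (mx b)
    omega
  | cons a l ih =>
    show max (mx a) (maxL (l ++ [b])) = max (max (mx a) (maxL l)) (mx b)
    rw [ih]
    omega

lemma maxL_hist_succ (t : ℕ) : maxL (hist e m (t + 1)) = max (maxL (hist e m t)) (mx (A e m t)) := by
  rw [hist, maxL_append]; rfl

lemma maxL_hist_lt {s t : ℕ} (h : s < t) : maxL (hist e m s) < maxL (hist e m t) := by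
  induction t with
  | zero => omega
  | succ t ih =>
    have key : maxL (hist e m t) < maxL (hist e m (t + 1)) := by
      rw [maxL_hist_succ]
      have h1 : off e m t ≤ mn (A e m t) := le_of_eq (mn_A e m t).symm
      have h2 := mn_le (mx_mem (A_ne e m t))
      have h3 := off_gt e m t
      omega
    rcases Nat.lt_or_ge s t with h' | h'
    · exact lt_trans (ih h') key
    · have : s = t := by omega
      subst this; exact key

lemma Dg_inj {g g' : ℕ} (h : Dg e m g = Dg e m g') : g = g' := by
  have hs : sfirst e m g = sfirst e m g' := by
    by_contra hne
    rcases lt_or_gt_of_ne hne with h' | h'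
    · have := maxL_hist_lt e m h'
      rw [Dg, Dg] at h
      omega
    · have := maxL_hist_lt e m h'
      rw [Dg, Dg] at h
      omega
  obtain ⟨j, hj⟩ := sfirst_spec e m g
  obtain ⟨j', hj'⟩ := sfirst_spec e m g'
  rw [hs, hj'] at hj
  have := Sum.inl.inj hj
  have h4 : (Nat.pair g' j').unpair = (Nat.pair g j).unpair := by rw [this]
  simpa [Nat.unpair_pair] using (congrArg Prod.fst h4).symm

lemma ZA (t : ℕ) : Z (A e m t) = (pat e m t).image (fun x : ℕ => (x : ℤ) + (off e m t : ℤ)) := by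
  rw [A_eq, Z, Finset.image_image]
  apply Finset.image_congr
  intro x _
  simp

lemma pat_eq_shift {t t' : ℕ} (h : pat e m t = pat e m t') :
    TI e m {t} ((off e m t' : ℤ) - off e m t) {t'} := by
  rw [TI, U_singleton, U_singleton, ZA, ZA, ← h, sh, Finset.image_image]
  apply Finset.image_congr
  intro x _
  simp only [Function.comp_apply]
  ring

-- ### pattern identities

noncomputable def srcPat (t : ℕ) : Sum ℕ (Finset ℕ) :=
  match src e m t with
  | .inl p => .inl p.unpair.1
  | .inr (I, _) => .inr I

noncomputable def patOf (I : Finset ℕ) : Sum ℕ (Finset ℕ) :=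
  if h : I.card = 1 then srcPat e m (mn I) else .inr I

lemma mn_singleton (t : ℕ) : mn ({t} : Finset ℕ) = t := by
  rw [mn_eq (Finset.singleton_nonempty t)]
  exact Finset.min'_singleton t

lemma patOf_singleton (t : ℕ) : patOf e m {t} = srcPat e m t := by
  rw [patOf, dif_pos (Finset.card_singleton t), mn_singleton]

lemma patOf_multi {I : Finset ℕ} (h : 2 ≤ I.card) : patOf e m I = .inr I := by
  rw [patOf, dif_neg (by omega)]

-- ### the rigidity invariant

lemma pat_def (t : ℕ) : pat e m t = patL e m (hist e m t) t := rfl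

lemma off_def (t : ℕ) :
    off e m t = 2 * maxL (hist e m t) + (badL e m (hist e m t) t).sup id + 1 := rfl

lemma mx_pair (d : ℕ) : mx ({0, d} : Finset ℕ) = d := by
  apply le_antisymm
  · obtain ⟨x, hx, -⟩ := Finset.mem_image.mp (Finset.mem_image_of_mem id
      (mx_mem (show ({0, d} : Finset ℕ).Nonempty from ⟨0, by simp⟩)))
    have hm := mx_mem (show ({0, d} : Finset ℕ).Nonempty from ⟨0, by simp⟩)
    rcases Finset.mem_insert.mp hm with h | h
    · omega
    · rw [Finset.mem_singleton] at h; omega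
  · exact le_mx (by simp)

lemma U_mono {I J : Finset ℕ} (h : I ⊆ J) : U e m I ⊆ U e m J :=
  Finset.biUnion_subset_biUnion_of_subset_left _ h

lemma srcPat_copy {t : ℕ} {I₀ : Finset ℕ} {j : ℕ} (h : src e m t = Sum.inr (I₀, j)) :
    srcPat e m t = Sum.inr I₀ := by
  rw [srcPat, h]

lemma srcPat_seed {t : ℕ} {p : ℕ} (h : src e m t = Sum.inl p) :
    srcPat e m t = Sum.inl p.unpair.1 := by
  rw [srcPat, h]

lemma bad_le {T : ℕ} {I' J : Finset ℕ} (hI' : ∀ i ∈ I', i < T) (hJ : ∀ j ∈ J, j < T) :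
    mx (U e m J) + mn (U e m I') - (mn (U e m J) + mx (pat e m T)) ≤
      (badL e m (hist e m T) T).sup id := by
  apply Finset.le_sup (f := id)
  apply Finset.mem_image.mpr
  refine ⟨(I', J), ?_, ?_⟩
  · rw [Finset.mem_product]
    constructor <;> rw [Finset.mem_powerset] <;> intro x hx <;> rw [Finset.mem_range]
    · exact hI' x hx
    · exact hJ x hx
  · rw [UL_hist e m hI', UL_hist e m hJ, ← pat_def]

lemma Inv : ∀ (T : ℕ) (I J : Finset ℕ) (k : ℤ), (∀ i ∈ I, i < T) → (∀ j ∈ J, j < T) →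
    I.Nonempty → TI e m I k J → patOf e m I = patOf e m J := by
  intro T
  induction T with
  | zero =>
    intro I J k hI hJ hne _
    obtain ⟨i, hi⟩ := hne
    exact absurd (hI i hi) (by omega)
  | succ T ih =>
    have step : ∀ (I J : Finset ℕ) (k : ℤ), (∀ i ∈ I, i < T + 1) → (∀ j ∈ J, j < T + 1) →
        I.Nonempty → T ∈ I → T ∉ J → TI e m I k J → patOf e m I = patOf e m J := by
      intro I J k hI hJ hne hTI hTJ h
      have hJne : J.Nonempty := TI_nonempty e m hne h
      have hJb : ∀ j ∈ J, j < T := fun j hj => by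
        have := hJ j hj
        have : j ≠ T := fun hh => hTJ (hh ▸ hj)
        omega
      by_cases hsing : I.card = 1
      · -- I = {T}
        obtain ⟨a, ha⟩ := Finset.card_eq_one.mp hsing
        have haT : a = T := by
          have := ha ▸ hTI
          exact (Finset.mem_singleton.mp this).symm
        subst haT
        subst ha
        rcases hsrc : src e m a with p | ⟨I₀, j⟩
        · -- seed
          have hcard : (U e m J).card = 2 := by
            have h1 := TI_card e m h
            rw [U_singleton, card_A_seed e m hsrc] at h1
            omega
          have hJ1 : J.card = 1 := by
            have := card_U (e := e) (m := m) (I := J)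
            have := Finset.card_pos.mpr hJne
            omega
          obtain ⟨t', ht'⟩ := Finset.card_eq_one.mp hJ1
          subst ht'
          rcases hsrc' : src e m t' with p' | ⟨I₀', j'⟩
          · -- both seeds : compare diameters
            have e1 := TI_k e m hne h
            have e2 := TI_mx e m hne h
            rw [U_singleton, U_singleton, mn_A, mn_A] at e1
            rw [U_singleton, U_singleton, mx_A, mx_A] at e2
            rw [pat_seed e m hsrc, pat_seed e m hsrc', mx_pair, mx_pair] at e2
            have hD : Dg e m p.unpair.1 = Dg e m p'.unpair.1 := by omega
            rw [patOf_singleton, patOf_singleton, srcPat_seed e m hsrc,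
              srcPat_seed e m hsrc', Dg_inj e m hD]
          · -- J is a copy block : impossible by cardinality
            have := card_A_copy e m hsrc'
            rw [← U_singleton e m t'] at this
            omega
        · -- a is a copy of pattern I₀
          have hr := src_ready e m a
          rw [hsrc] at hr
          have hv := src_valid e m a
          rw [hsrc] at hv
          obtain ⟨hI₀2, -⟩ : 2 ≤ I₀.card ∧ j < m - 1 := hv
          have hc := copy_shift e m hsrc
          -- TI J (-k - δ) I₀
          have h2 := TI_trans e m (TI_symm e m h) (TI_symm e m hc)
          have h3 : patOf e m J = patOf e m I₀ :=
            ih J I₀ _ hJb (fun i hi => lt_of_lt_of_le (hr i hi) (by omega)) hJne h2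
          rw [h3, patOf_singleton, srcPat_copy e m hsrc, patOf_multi e m hI₀2]
      · -- 2 ≤ I.card : impossible, by choice of the offset
        exfalso
        have hI2 : 2 ≤ I.card := by
          have := Finset.card_pos.mpr hne
          omega
        set I' := I.erase T with hI'def
        have hI'ne : I'.Nonempty := by
          apply Finset.card_pos.mp
          rw [Finset.card_erase_of_mem hTI]
          omega
        have hI'b : ∀ i ∈ I', i < T := by
          intro i hi
          obtain ⟨hne', hmem⟩ := Finset.mem_erase.mp hi
          have := hI i hmem
          omega
        have hsubset : I' ⊆ I := Finset.erase_subset _ _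
        -- mn (U I) = mn (U I')
        have hmn : mn (U e m I) = mn (U e m I') := by
          apply le_antisymm
          · exact mn_le (U_mono e m hsubset (mn_mem (U_ne e m hI'ne)))
          · obtain ⟨i, hi, hx⟩ := Finset.mem_biUnion.mp (mn_mem (U_ne e m hne))
            by_cases hiT : i = T
            · exfalso
              subst hiT
              have hx0 : mn (U e m I') ∈ U e m I := U_mono e m hsubset (mn_mem (U_ne e m hI'ne))
              obtain ⟨i₀, hi₀, hx₀⟩ := Finset.mem_biUnion.mp (mn_mem (U_ne e m hI'ne))
              have h5 : mn (U e m I') < mn (U e m I) :=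
                lt_of_lt_of_le (elem_lt e m (hI'b i₀ hi₀) hx₀ (mn_mem (A_ne e m i)))
                  (by exact mn_le hx)
              have h6 := mn_le hx0
              omega
            · have : i ∈ I' := Finset.mem_erase.mpr ⟨hiT, hi⟩
              exact mn_le (Finset.mem_biUnion.mpr ⟨i, this, hx⟩)
        -- max of U I is the top of block T
        have hmax : I.max' hne = T :=
          le_antisymm (Finset.max'_le _ _ _ (fun i hi => by have := hI i hi; omega))
            (Finset.le_max' _ _ hTI)
        have hmxI : mx (U e m I) = mx (pat e m T) + off e m T := by
          rw [mx_U e m hne, hmax, mx_A]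
        have e1 := TI_k e m hne h
        have e2 := TI_mx e m hne h
        have hble := bad_le e m hI'b hJb
        have hoff := off_def e m T
        rw [hmxI] at e2
        rw [hmn] at e1
        omega
    intro I J k hI hJ hne h
    by_cases hI' : T ∈ I <;> by_cases hJ' : T ∈ J
    · -- T in both : k = 0
      have hImax : I.max' hne = T :=
        le_antisymm (Finset.max'_le _ _ _ (fun i hi => by have := hI i hi; omega))
          (Finset.le_max' _ _ hI')
      have hJne : J.Nonempty := TI_nonempty e m hne h
      have hJmax : J.max' hJne = T :=
        le_antisymm (Finset.max'_le _ _ _ (fun j hj => by have := hJ j hj; omega))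
          (Finset.le_max' _ _ hJ')
      have e2 := TI_mx e m hne h
      rw [mx_U e m hne, mx_U e m hJne, hImax, hJmax] at e2
      have hk : k = 0 := by omega
      subst hk
      rw [TI_zero e m h]
    · exact step I J k hI hJ hne hI' hJ' h
    · have hJne : J.Nonempty := TI_nonempty e m hne h
      exact (step J I (-k) hJ hI hJne hJ' hI' (TI_symm e m h)).symm
    · apply ih I J k _ _ hne h
      · intro i hi
        have h1 := hI i hi
        have : i ≠ T := fun hh => hI' (hh ▸ hi)
        omega
      · intro j hj
        have h1 := hJ j hj
        have : j ≠ T := fun hh => hJ' (hh ▸ hj)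
        omega

-- ### occurrence sets

noncomputable def occ (P : Sum ℕ (Finset ℕ)) : Finset (Finset ℕ) :=
  match P with
  | .inl g => ((Finset.range (tgt e g)).image
      (fun j => stepOf e m (Sum.inl (Nat.pair g j)))).image (fun t => ({t} : Finset ℕ))
  | .inr I₀ => insert I₀ (((Finset.range (m - 1)).image
      (fun j => stepOf e m (Sum.inr (I₀, j)))).image (fun t => ({t} : Finset ℕ)))

lemma src_stepOf_inl {g j : ℕ} (hj : j < tgt e g) :
    src e m (stepOf e m (Sum.inl (Nat.pair g j))) = Sum.inl (Nat.pair g j) :=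
  src_stepOf e m (by simp [validT, Nat.unpair_pair]; omega)

lemma src_stepOf_inr {I₀ : Finset ℕ} {j : ℕ} (hI : 2 ≤ I₀.card) (hj : j < m - 1) :
    src e m (stepOf e m (Sum.inr (I₀, j))) = Sum.inr (I₀, j) :=
  src_stepOf e m (⟨hI, hj⟩ : validT e m (Sum.inr (I₀, j)))

lemma card_occ_inl (g : ℕ) : (occ e m (Sum.inl g)).card = tgt e g := by
  rw [occ]
  rw [Finset.card_image_of_injective _ (fun a b hab => Finset.singleton_injective hab)]
  rw [Finset.card_image_of_injOn, Finset.card_range]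
  intro a ha b hb hab
  rw [Finset.mem_coe, Finset.mem_range] at ha hb
  have h1 : src e m (stepOf e m (Sum.inl (Nat.pair g a))) = Sum.inl (Nat.pair g a) :=
    src_stepOf_inl e m ha
  have h2 : src e m (stepOf e m (Sum.inl (Nat.pair g b))) = Sum.inl (Nat.pair g b) :=
    src_stepOf_inl e m hb
  dsimp only at hab
  rw [hab, h2] at h1
  have h3 := Sum.inl.inj h1
  have h4 : (Nat.pair g b).unpair = (Nat.pair g a).unpair := by rw [h3]
  simpa [Nat.unpair_pair] using (congrArg Prod.snd h4).symm

lemma card_occ_inr {I₀ : Finset ℕ} (hI : 2 ≤ I₀.card) (hm : 1 ≤ m) :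
    (occ e m (Sum.inr I₀)).card = m := by
  rw [occ]
  have hcard : (((Finset.range (m - 1)).image
      (fun j => stepOf e m (Sum.inr (I₀, j)))).image (fun t => ({t} : Finset ℕ))).card = m - 1 := by
    rw [Finset.card_image_of_injective _ (fun a b hab => Finset.singleton_injective hab)]
    rw [Finset.card_image_of_injOn, Finset.card_range]
    intro a ha b hb hab
    rw [Finset.mem_coe, Finset.mem_range] at ha hb
    have h1 := src_stepOf_inr e m hI ha
    have h2 := src_stepOf_inr e m hI hb
    dsimp only at hab
    rw [hab, h2] at h1
    exact (Prod.mk.injEq _ _ _ _ ▸ Sum.inr.inj h1).2.symm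
  rw [Finset.card_insert_of_notMem, hcard]
  · omega
  · intro hmem
    obtain ⟨t, -, ht⟩ := Finset.mem_image.mp hmem
    have : I₀.card = 1 := by rw [← ht]; exact Finset.card_singleton t
    omega

lemma patOf_inr_card {I : Finset ℕ} {X : Finset ℕ} (hne : I.Nonempty)
    (h : patOf e m I = Sum.inr X) : 2 ≤ X.card := by
  rw [patOf] at h
  split_ifs at h with h1
  · rw [srcPat] at h
    rcases hsrc : src e m (mn I) with p | ⟨I₀, j⟩ <;> rw [hsrc] at h
    · simp at h
    · have hv := src_valid e m (mn I)
      rw [hsrc] at hv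
      obtain ⟨hI₀2, -⟩ : 2 ≤ I₀.card ∧ j < m - 1 := hv
      have hIX : I₀ = X := by simpa using h
      exact hIX ▸ hI₀2
  · have : I = X := by simpa using h
    subst this
    have := Finset.card_pos.mpr hne
    omega

lemma mem_occ_iff {P : Sum ℕ (Finset ℕ)} (hP : ∀ X, P = Sum.inr X → 2 ≤ X.card)
    {J : Finset ℕ} : J ∈ occ e m P ↔ (J.Nonempty ∧ patOf e m J = P) := by
  constructor
  · intro hJ
    rcases P with g | I₀
    · rw [occ] at hJ
      obtain ⟨t, ht, rfl⟩ := Finset.mem_image.mp hJ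
      obtain ⟨j, hj, rfl⟩ := Finset.mem_image.mp ht
      rw [Finset.mem_range] at hj
      refine ⟨Finset.singleton_nonempty _, ?_⟩
      rw [patOf_singleton, srcPat_seed e m (src_stepOf_inl e m hj), Nat.unpair_pair]
    · have hI₀ : 2 ≤ I₀.card := hP I₀ rfl
      rw [occ] at hJ
      rcases Finset.mem_insert.mp hJ with h | h
      · subst h
        exact ⟨Finset.card_pos.mp (by omega), patOf_multi e m hI₀⟩
      · obtain ⟨t, ht, rfl⟩ := Finset.mem_image.mp h
        obtain ⟨j, hj, rfl⟩ := Finset.mem_image.mp ht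
        rw [Finset.mem_range] at hj
        refine ⟨Finset.singleton_nonempty _, ?_⟩
        rw [patOf_singleton, srcPat_copy e m (src_stepOf_inr e m hI₀ hj)]
  · rintro ⟨hJne, hpat⟩
    by_cases h1 : J.card = 1
    · obtain ⟨t, rfl⟩ := Finset.card_eq_one.mp h1
      rw [patOf_singleton] at hpat
      rw [srcPat] at hpat
      rcases hsrc : src e m t with p | ⟨I₀, j⟩ <;> rw [hsrc] at hpat
      · -- seed
        subst hpat
        have hv := src_valid e m t
        rw [hsrc] at hv
        have hv' : p.unpair.2 < tgt e p.unpair.1 := hv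
        rw [occ]
        apply Finset.mem_image.mpr
        refine ⟨t, ?_, rfl⟩
        apply Finset.mem_image.mpr
        refine ⟨p.unpair.2, Finset.mem_range.mpr hv', ?_⟩
        apply src_inj e m
        rw [src_stepOf_inl e m hv', Nat.pair_unpair, hsrc]
      · -- copy
        subst hpat
        have hv := src_valid e m t
        rw [hsrc] at hv
        obtain ⟨hI₀2, hjm⟩ : 2 ≤ I₀.card ∧ j < m - 1 := hv
        rw [occ]
        apply Finset.mem_insert.mpr
        right
        apply Finset.mem_image.mpr
        refine ⟨t, ?_, rfl⟩
        apply Finset.mem_image.mpr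
        refine ⟨j, Finset.mem_range.mpr hjm, ?_⟩
        apply src_inj e m
        rw [src_stepOf_inr e m hI₀2 hjm, hsrc]
    · have h2 : 2 ≤ J.card := by
        have := Finset.card_pos.mpr hJne
        omega
      rw [patOf_multi e m h2] at hpat
      subst hpat
      rw [occ]
      exact Finset.mem_insert_self _ _

lemma occ_connected {P : Sum ℕ (Finset ℕ)} (hP : ∀ X, P = Sum.inr X → 2 ≤ X.card)
    {J J' : Finset ℕ} (hJ : J ∈ occ e m P) (hJ' : J' ∈ occ e m P) :
    ∃ c, TI e m J c J' := by
  rcases P with g | I₀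
  · rw [occ] at hJ hJ'
    obtain ⟨t, ht, rfl⟩ := Finset.mem_image.mp hJ
    obtain ⟨j, hj, rfl⟩ := Finset.mem_image.mp ht
    obtain ⟨t', ht', rfl⟩ := Finset.mem_image.mp hJ'
    obtain ⟨j', hj', rfl⟩ := Finset.mem_image.mp ht'
    rw [Finset.mem_range] at hj hj'
    refine ⟨_, pat_eq_shift e m ?_⟩
    rw [pat_seed e m (src_stepOf_inl e m hj), pat_seed e m (src_stepOf_inl e m hj'),
      Nat.unpair_pair, Nat.unpair_pair]
  · have hI₀ : 2 ≤ I₀.card := hP I₀ rfl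
    have key : ∀ K ∈ occ e m (Sum.inr I₀), ∃ c, TI e m I₀ c K := by
      intro K hK
      rw [occ] at hK
      rcases Finset.mem_insert.mp hK with h | h
      · subst h
        refine ⟨0, ?_⟩
        rw [TI, sh_zero]
      · obtain ⟨t, ht, rfl⟩ := Finset.mem_image.mp h
        obtain ⟨j, hj, rfl⟩ := Finset.mem_image.mp ht
        rw [Finset.mem_range] at hj
        exact ⟨_, copy_shift e m (src_stepOf_inr e m hI₀ hj)⟩
    obtain ⟨c, hc⟩ := key J hJ
    obtain ⟨c', hc'⟩ := key J' hJ'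
    exact ⟨_, TI_trans e m (TI_symm e m hc) hc'⟩

lemma occ_nonempty_mem {P : Sum ℕ (Finset ℕ)} {J : Finset ℕ} (hJ : J ∈ occ e m P)
    (hP : ∀ X, P = Sum.inr X → 2 ≤ X.card) : J.Nonempty :=
  ((mem_occ_iff e m hP).mp hJ).1

-- the translate set, finset version
lemma K_eq {I : Finset ℕ} (hne : I.Nonempty) :
    {k : ℤ | ∃ J : Finset ℕ, TI e m I k J} =
      ↑((occ e m (patOf e m I)).image
        (fun J => (mn (U e m J) : ℤ) - (mn (U e m I) : ℤ))) := by
  have hP : ∀ X, patOf e m I = Sum.inr X → 2 ≤ X.card := fun X h => patOf_inr_card e m hne h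
  have hself : I ∈ occ e m (patOf e m I) := (mem_occ_iff e m hP).mpr ⟨hne, rfl⟩
  ext k
  simp only [Set.mem_setOf_eq, Finset.coe_image, Set.mem_image, Finset.mem_coe]
  constructor
  · rintro ⟨J, hJ⟩
    have hJne : J.Nonempty := TI_nonempty e m hne hJ
    have hUne : (I ∪ J).Nonempty := hne.mono Finset.subset_union_left
    have hpat : patOf e m I = patOf e m J := by
      apply Inv e m ((I ∪ J).max' hUne + 1) I J k ?_ ?_ hne hJ
      · intro x hx
        have := Finset.le_max' (I ∪ J) x (Finset.mem_union_left _ hx)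
        omega
      · intro x hx
        have := Finset.le_max' (I ∪ J) x (Finset.mem_union_right _ hx)
        omega
    refine ⟨J, ?_, (TI_k e m hne hJ).symm⟩
    exact (mem_occ_iff e m hP).mpr ⟨hJne, hpat.symm⟩
  · rintro ⟨J, hJ, rfl⟩
    obtain ⟨c, hc⟩ := occ_connected e m hP hself hJ
    have := TI_k e m hne hc
    exact ⟨J, this ▸ hc⟩

-- ### final counting

lemma occ_inj {I : Finset ℕ} (hne : I.Nonempty) :
    Set.InjOn (fun J => (mn (U e m J) : ℤ) - (mn (U e m I) : ℤ))
      ↑(occ e m (patOf e m I)) := by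
  have hP : ∀ X, patOf e m I = Sum.inr X → 2 ≤ X.card := fun X h => patOf_inr_card e m hne h
  intro J hJ J' hJ' hval
  rw [Finset.mem_coe] at hJ hJ'
  obtain ⟨c, hc⟩ := occ_connected e m hP hJ hJ'
  have hJne : J.Nonempty := occ_nonempty_mem e m hJ hP
  have hk := TI_k e m hJne hc
  simp only at hval
  have hc0 : c = 0 := by omega
  subst hc0
  exact TI_zero e m hc

lemma K_card {I : Finset ℕ} (hne : I.Nonempty) :
    ((occ e m (patOf e m I)).image
        (fun J => (mn (U e m J) : ℤ) - (mn (U e m I) : ℤ))).card =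
      (occ e m (patOf e m I)).card :=
  Finset.card_image_of_injOn (occ_inj e m hne)

-- set-level bridge
lemma setU (I : Finset ℕ) :
    (⋃ i ∈ I, ((↑) : ℕ → ℤ) '' ↑(A e m i)) = ↑(Z (U e m I)) := by
  rw [Z, U, Finset.coe_image, Finset.coe_biUnion]
  rw [Set.image_iUnion₂]
  simp

lemma shift_coe (F : Finset ℤ) (k : ℤ) :
    (fun c => c + k) '' ↑F = ↑(sh F k) := by
  rw [sh, Finset.coe_image]

end S2

open S2 in
/-- For every nonempty set `E` of positive integers there exists a sequence
`(A i)` of nonempty finite subsets of `ℕ` with `2 * max (A i) < min (A (i+1))`, such that,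
letting `𝒮` be the collection of subsets of `ℤ` that are unions of finitely many of the
`A i`: (a) for every nonempty `C ∈ 𝒮` the set `{k : ℤ | C + k ∈ 𝒮}` is finite with
cardinality in `E`, and (b) every `n ∈ E` arises as such a cardinality. -/
theorem stmt_2 (E : Set ℕ) (hne : E.Nonempty) (hpos : ∀ n ∈ E, 0 < n) :
    ∃ (A : ℕ → Finset ℕ) (hA : ∀ i, (A i).Nonempty),
      (∀ i, 2 * (A i).max' (hA i) < (A (i + 1)).min' (hA (i + 1))) ∧
      (let S : Set (Set ℤ) :=
        {C | ∃ I : Finset ℕ, C = ⋃ i ∈ I, ((↑) : ℕ → ℤ) '' ↑(A i)};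
      (∀ C ∈ S, C.Nonempty →
          ({k : ℤ | (fun c => c + k) '' C ∈ S}).Finite ∧
          ({k : ℤ | (fun c => c + k) '' C ∈ S}).ncard ∈ E) ∧
      (∀ n ∈ E, ∃ C ∈ S, C.Nonempty ∧
          ({k : ℤ | (fun c => c + k) '' C ∈ S}).Finite ∧
          ({k : ℤ | (fun c => c + k) '' C ∈ S}).ncard = n)) := by
  classical
  obtain ⟨m, hm⟩ := hne
  have hm1 : 1 ≤ m := hpos m hm
  set e : ℕ → ℕ := fun n => if n ∈ E then n else m with he
  have he_mem : ∀ g, e g ∈ E := by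
    intro g
    by_cases h : g ∈ E <;> simp [he, h, hm]
  have he_pos : ∀ g, 1 ≤ e g := fun g => hpos _ (he_mem g)
  have htgt : ∀ g, tgt e g = e g := by
    intro g
    have := he_pos g
    rw [tgt]
    omega
  refine ⟨A e m, fun i => A_ne e m i, ?_, ?_⟩
  · intro i
    have := sep e m (show i < i + 1 by omega)
    rw [← mx_eq (A_ne e m i), ← mn_eq (A_ne e m (i + 1))]
    exact this
  intro S
  -- key : for C = union over I, the translate set is the coe of a finset
  have key : ∀ I : Finset ℕ, I.Nonempty →
      {k : ℤ | (fun c => c + k) '' (⋃ i ∈ I, ((↑) : ℕ → ℤ) '' ↑(A e m i)) ∈ S} =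
        ↑((occ e m (patOf e m I)).image
          (fun J => (mn (U e m J) : ℤ) - (mn (U e m I) : ℤ))) := by
    intro I hIne
    rw [← K_eq e m hIne]
    ext k
    simp only [Set.mem_setOf_eq]
    rw [setU, shift_coe]
    constructor
    · rintro ⟨J, hJ⟩
      refine ⟨J, ?_⟩
      rw [setU] at hJ
      rw [TI]
      exact_mod_cast hJ
    · rintro ⟨J, hJ⟩
      refine ⟨J, ?_⟩
      rw [setU]
      exact_mod_cast hJ
  have hcard_mem : ∀ I : Finset ℕ, I.Nonempty → (occ e m (patOf e m I)).card ∈ E := by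
    intro I hIne
    rcases hpat : patOf e m I with g | X
    · rw [card_occ_inl, htgt]
      exact he_mem g
    · rw [card_occ_inr e m (patOf_inr_card e m hIne hpat) hm1]
      exact hm
  constructor
  · -- (a)
    rintro C ⟨I, rfl⟩ hCne
    have hIne : I.Nonempty := by
      by_contra h
      rw [Finset.not_nonempty_iff_eq_empty] at h
      subst h
      simp at hCne
    rw [key I hIne]
    refine ⟨Finset.finite_toSet _, ?_⟩
    rw [Set.ncard_coe_finset, K_card e m hIne]
    exact hcard_mem I hIne
  · -- (b)
    intro n hn
    have hen : e n = n := by simp [he, hn]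
    set t₀ := stepOf e m (Sum.inl (Nat.pair n 0)) with ht₀
    have hsrc : src e m t₀ = Sum.inl (Nat.pair n 0) := by
      apply src_stepOf_inl
      rw [htgt, hen]
      exact hpos n hn
    refine ⟨⋃ i ∈ ({t₀} : Finset ℕ), ((↑) : ℕ → ℤ) '' ↑(A e m i), ⟨{t₀}, rfl⟩, ?_, ?_, ?_⟩
    · rw [setU]
      have := Z_ne (U_ne e m (Finset.singleton_nonempty t₀))
      exact_mod_cast Finset.coe_nonempty.mpr this
    · rw [key _ (Finset.singleton_nonempty t₀)]
      exact Finset.finite_toSet _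
    · rw [key _ (Finset.singleton_nonempty t₀), Set.ncard_coe_finset,
        K_card e m (Finset.singleton_nonempty t₀)]
      rw [patOf_singleton, srcPat_seed e m hsrc, Nat.unpair_pair]
      rw [card_occ_inl, htgt, hen]
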